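/- arXiv:2501.03516 — 2 statements merged into one kernel-verified Lean document; each statement's English description precedes it below -/
import Mathlib

section
/- Let q be a prime power, n coprime to q, ζ a primitive n-th root of unity over F_q, and let c(γ) = {γ, γq, …, γq^{τ−1}} be a q-cyclotomic coset modulo n. Then the monic irreducible polynomial M(X) = ∏_{j=0}^{τ−1} (X − ζ^{γ q^j}) over F_q is a binomial (of the form X^τ − a) if and only if c(γ) is an equal-difference coset. -/
/-- The `q`-cyclotomic coset of `γ` modulo `n`, i.e. `{γ q^j : j ≥ 0} ⊆ ℤ/nℤ`. -/
def coset (n q : ℕ) (γ : ZMod n) : Set (ZMod n) := {x | ∃ j : ℕ, x = γ * (q : ZMod n) ^ j}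

/-- `τ` is the size of the coset: the least positive `t` with `γ q^t ≡ γ (mod n)`. -/
def cosetSize (n q : ℕ) (γ : ZMod n) (τ : ℕ) : Prop :=
  IsLeast {t : ℕ | 0 < t ∧ γ * (q : ZMod n) ^ t = γ} τ

/-- The arithmetic progression `{δ + k (n/μ) : 0 ≤ k < μ}` in `ℤ/nℤ`. -/
def progression (n : ℕ) (δ : ZMod n) (μ : ℕ) : Set (ZMod n) :=
  {x | ∃ k < μ, x = δ + ((k * (n / μ) : ℕ) : ZMod n)}

/-- The coset `c_{n/q}(γ)` is of equal difference. -/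
def IsEqDiffCoset (n q : ℕ) (γ : ZMod n) : Prop :=
  ∃ τ : ℕ, cosetSize n q γ τ ∧ τ ∣ n ∧ coset n q γ = progression n γ τ

/-- The radical of `m`: the product of its distinct prime divisors. -/
def rad (m : ℕ) : ℕ := ∏ p ∈ m.primeFactors, p

/-! The roots `ζ ^ (γ q ^ j)`, `j < τ`, are distinct, so their product is a binomial `X ^ τ - a`
exactly when they all have the same `τ`-th power, i.e. when `τ` kills every difference
`γ q ^ j - γ` in `ℤ/nℤ`. These differences are then also killed by `g = gcd(n, τ)`, so they lie in
the progression of the `g` multiples of `n / g`; being `τ` distinct elements, this forces `τ ≤ g`,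
hence `τ ∣ n`, and the coset fills the whole progression `{γ + k n / τ : k < τ}`. -/

open Polynomial Finset

theorem IsPrimitiveRoot.pow_eq_pow_iff_natCast_eq {M : Type*} [CommMonoid M] {ζ : M} {n : ℕ}
    (hζ : IsPrimitiveRoot ζ n) (hn : n ≠ 0) {a b : ℕ} : ζ ^ a = ζ ^ b ↔ (a : ZMod n) = b := by
  rw [(hζ.isOfFinOrder hn).pow_eq_pow_iff_modEq, ← hζ.eq_orderOf, ZMod.natCast_eq_natCast_iff]

theorem exists_prod_X_sub_C_eq_X_pow_sub_C_iff {R ι : Type*} [CommRing R] [IsDomain R]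
    (s : Finset ι) {β : ι → R} (hβ : Set.InjOn β s) :
    (∃ a, ∏ i ∈ s, (X - C (β i)) = X ^ #s - C a) ↔ ∃ a, ∀ i ∈ s, β i ^ #s = a := by
  constructor
  · rintro ⟨a, h⟩
    refine ⟨a, fun i hi => ?_⟩
    have hroot := congrArg (eval (β i)) h
    rw [eval_prod, prod_eq_zero hi (by simp)] at hroot
    simpa [sub_eq_zero, eq_comm] using hroot
  · rintro ⟨a, ha⟩
    rcases s.eq_empty_or_nonempty with rfl | hs
    · exact ⟨0, by simp⟩
    refine ⟨a, ?_⟩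
    have hmonic : (X ^ #s - C a).Monic := monic_X_pow_sub_C a hs.card_pos.ne'
    have hdvd : ∏ i ∈ s, (X - C (β i)) ∣ X ^ #s - C a := by
      have hle : s.val.map β ≤ (X ^ #s - C a).roots := by
        rw [Multiset.le_iff_subset (s.nodup.map_on hβ)]
        intro r hr
        obtain ⟨i, hi, rfl⟩ := Multiset.mem_map.1 hr
        rw [mem_roots hmonic.ne_zero, IsRoot, eval_sub, eval_pow, eval_X, eval_C, ha i hi, sub_self]
      rw [prod_eq_multiset_prod, ← Function.comp_def (fun r => X - C r) β,
        ← Multiset.map_map]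
      exact (Multiset.prod_X_sub_C_dvd_iff_le_roots hmonic.ne_zero _).2 hle
    refine (eq_of_monic_of_dvd_of_natDegree_le (monic_prod_of_monic _ _ fun i _ => monic_X_sub_C _)
      hmonic hdvd ?_).symm
    rw [natDegree_prod_of_monic _ _ fun i _ => monic_X_sub_C _, natDegree_X_pow_sub_C]
    simp

theorem mul_pow_eq_self_of_mul_eq_self {M : Type*} [Monoid M] {a b : M} (h : a * b = a) (s : ℕ) :
    a * b ^ s = a := by
  induction s with
  | zero => simp
  | succ s ih => rw [pow_succ, ← mul_assoc, ih, h]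

theorem mul_pow_mod_eq_mul_pow {M : Type*} [Monoid M] {a b : M} {τ : ℕ} (h : a * b ^ τ = a)
    (j : ℕ) : a * b ^ (j % τ) = a * b ^ j := by
  conv_rhs => rw [← Nat.div_add_mod j τ, pow_add, pow_mul, ← mul_assoc,
    mul_pow_eq_self_of_mul_eq_self h]

section CyclotomicCoset

variable {n q τ : ℕ} {γ : ZMod n}

theorem injOn_mul_pow_of_cosetSize (hτ : cosetSize n q γ τ) :
    Set.InjOn (fun j => γ * (q : ZMod n) ^ j) (Set.Iio τ) := by
  suffices ∀ i j, i < j → j < τ → γ * (q : ZMod n) ^ i ≠ γ * (q : ZMod n) ^ j by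
    intro i hi j hj hij
    by_contra hne
    rcases Nat.lt_or_gt_of_ne hne with h | h
    · exact this i j h hj hij
    · exact this j i h hi hij.symm
  intro i j hij hjτ heq
  -- multiplying by `q ^ (τ - j)` exhibits the shorter period `i + (τ - j) < τ`
  have hperiod : γ * (q : ZMod n) ^ (i + (τ - j)) = γ := by
    rw [pow_add, ← mul_assoc, heq, mul_assoc, ← pow_add, Nat.add_sub_cancel' hjτ.le, hτ.1.2]
  have := hτ.2 ⟨by omega, hperiod⟩
  omega

theorem coset_eq_image (hτ : cosetSize n q γ τ) :
    coset n q γ = (fun j => γ * (q : ZMod n) ^ j) '' Set.Iio τ := by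
  ext x
  constructor
  · rintro ⟨j, rfl⟩
    exact ⟨j % τ, Nat.mod_lt j hτ.1.1, mul_pow_mod_eq_mul_pow hτ.1.2 j⟩
  · rintro ⟨j, -, rfl⟩
    exact ⟨j, rfl⟩

theorem ncard_coset (hτ : cosetSize n q γ τ) : (coset n q γ).ncard = τ := by
  rw [coset_eq_image hτ, (injOn_mul_pow_of_cosetSize hτ).ncard_image, Set.ncard_Iio_nat]

end CyclotomicCoset

section Progression

variable {n : ℕ}

theorem ZMod.mul_gcd_eq_zero {y : ZMod n} {m : ℕ} (h : y * m = 0) : y * (n.gcd m : ℕ) = 0 := by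
  rw [mul_comm, ← nsmul_eq_mul, ← addOrderOf_dvd_iff_nsmul_eq_zero] at h ⊢
  refine Nat.dvd_gcd (addOrderOf_dvd_iff_nsmul_eq_zero.2 ?_) h
  simp

theorem mem_progression_iff [NeZero n] {m : ℕ} (hm : m ∣ n) {δ x : ZMod n} :
    x ∈ progression n δ m ↔ x * m = δ * m := by
  constructor
  · rintro ⟨k, -, rfl⟩
    rw [add_mul, ← Nat.cast_mul, mul_assoc, Nat.div_mul_cancel hm, Nat.cast_mul,
      ZMod.natCast_self, mul_zero, add_zero]
  · intro h
    have hm0 : 0 < m := Nat.pos_of_dvd_of_pos hm (NeZero.pos n)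
    obtain ⟨k, hk⟩ : n / m ∣ (x - δ).val := by
      refine Nat.dvd_of_mul_dvd_mul_right hm0 ?_
      rw [Nat.div_mul_cancel hm, ← ZMod.natCast_eq_zero_iff, Nat.cast_mul, ZMod.natCast_zmod_val,
        sub_mul, h, sub_self]
    refine ⟨k, ?_, ?_⟩
    · refine Nat.lt_of_mul_lt_mul_left (a := n / m) ?_
      rw [← hk, Nat.div_mul_cancel hm]
      exact (x - δ).val_lt
    · rw [mul_comm, ← hk, ZMod.natCast_zmod_val, add_sub_cancel]

theorem ncard_progression_le (δ : ZMod n) (m : ℕ) : (progression n δ m).ncard ≤ m := by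
  have : progression n δ m = (fun k : ℕ => δ + ((k * (n / m) : ℕ) : ZMod n)) '' Set.Iio m := by
    ext x; simp [progression, eq_comm]
  rw [this]
  exact (Set.ncard_image_le (Set.finite_Iio m)).trans_eq (Set.ncard_Iio_nat m)

end Progression

theorem isEqDiffCoset_iff {n q τ : ℕ} [NeZero n] {γ : ZMod n} (hτ : cosetSize n q γ τ) :
    IsEqDiffCoset n q γ ↔ ∀ j < τ, γ * (q : ZMod n) ^ j * τ = γ * τ := by
  constructor
  · rintro ⟨τ', hτ', hτn, hcoset⟩ j -
    obtain rfl := hτ'.unique hτ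
    rw [← mem_progression_iff hτn, ← hcoset]
    exact ⟨j, rfl⟩
  · intro h
    have coset_subset {m : ℕ} (hm : m ∣ n) (hmul : ∀ j < τ, γ * (q : ZMod n) ^ j * m = γ * m) :
        coset n q γ ⊆ progression n γ m := by
      rw [coset_eq_image hτ]
      rintro - ⟨j, hj, rfl⟩
      exact (mem_progression_iff hm).2 (hmul j hj)
    have hgcd : ∀ j < τ, γ * (q : ZMod n) ^ j * (n.gcd τ : ℕ) = γ * (n.gcd τ : ℕ) := by
      intro j hj
      rw [← sub_eq_zero, ← sub_mul]
      exact ZMod.mul_gcd_eq_zero (by rw [sub_mul, h j hj, sub_self])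
    have hτ_le_gcd : τ ≤ n.gcd τ :=
      calc τ = (coset n q γ).ncard := (ncard_coset hτ).symm
        _ ≤ (progression n γ (n.gcd τ)).ncard :=
          Set.ncard_le_ncard (coset_subset (Nat.gcd_dvd_left n τ) hgcd)
        _ ≤ n.gcd τ := ncard_progression_le γ _
    have hτn : τ ∣ n := Nat.gcd_eq_right_iff_dvd.1 <|
      le_antisymm (Nat.le_of_dvd hτ.1.1 (Nat.gcd_dvd_right n τ)) hτ_le_gcd
    refine ⟨τ, hτ, hτn, Set.eq_of_subset_of_ncard_le (coset_subset hτn h) ?_⟩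
    rw [ncard_coset hτ]
    exact ncard_progression_le γ τ

theorem induced_polynomial_binomial_iff_general (F K : Type*) [Fintype F] [Field K]
    (n : ℕ) (hn : 0 < n)
    (ζ : K) (hζ : IsPrimitiveRoot ζ n) (γ : ZMod n) (τ : ℕ)
    (hτ : cosetSize n (Fintype.card F) γ τ) :
    (∃ a : K, (∏ j ∈ Finset.range τ,
        (Polynomial.X - Polynomial.C (ζ ^ (γ.val * Fintype.card F ^ j)))) =
      Polynomial.X ^ τ - Polynomial.C a) ↔
    IsEqDiffCoset n (Fintype.card F) γ := by
  have : NeZero n := ⟨hn.ne'⟩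
  set q := Fintype.card F
  have hpow (i j m : ℕ) :
      (ζ ^ (γ.val * q ^ i)) ^ m = (ζ ^ (γ.val * q ^ j)) ^ m ↔
        γ * (q : ZMod n) ^ i * m = γ * (q : ZMod n) ^ j * m := by
    rw [← pow_mul, ← pow_mul, hζ.pow_eq_pow_iff_natCast_eq hn.ne']
    push_cast [ZMod.natCast_zmod_val]
    rfl
  have hinj : Set.InjOn (fun j => ζ ^ (γ.val * q ^ j)) (range τ) := fun i hi j hj hij =>
    injOn_mul_pow_of_cosetSize hτ (by simpa using hi) (by simpa using hj)
      (by simpa using (hpow i j 1).1 (by simpa using hij))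
  have hbinomial := exists_prod_X_sub_C_eq_X_pow_sub_C_iff (range τ) hinj
  rw [card_range] at hbinomial
  rw [hbinomial, isEqDiffCoset_iff hτ]
  constructor
  · rintro ⟨a, ha⟩ j hj
    simpa using (hpow j 0 τ).1 ((ha j (mem_range.2 hj)).trans (ha 0 (mem_range.2 hτ.1.1)).symm)
  · intro h
    exact ⟨_, fun j hj => (hpow j 0 τ).2 (by simpa using h j (mem_range.1 hj))⟩

/-- Let `F` be a finite field with `q` elements, `ζ` a primitive `n`-th root of unity in
an extension `K` of `F`, and `c(γ)` a `q`-cyclotomic coset modulo `n` of size `τ`. The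
irreducible factor `M(X) = ∏_{j<τ} (X - ζ^(γ q^j))` of `X^n - 1` is a binomial iff
`c(γ)` is an equal-difference coset. -/
theorem induced_polynomial_binomial_iff (F K : Type*) [Field F] [Fintype F] [Field K]
    [Algebra F K] (n : ℕ) (hn : 0 < n) (hco : Nat.Coprime (Fintype.card F) n)
    (ζ : K) (hζ : IsPrimitiveRoot ζ n) (γ : ZMod n) (τ : ℕ)
    (hτ : cosetSize n (Fintype.card F) γ τ) :
    (∃ a : K, (∏ j ∈ Finset.range τ,
        (Polynomial.X - Polynomial.C (ζ ^ (γ.val * Fintype.card F ^ j)))) =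
      Polynomial.X ^ τ - Polynomial.C a) ↔
    IsEqDiffCoset n (Fintype.card F) γ :=
  induced_polynomial_binomial_iff_general F K n hn ζ hζ γ τ hτ
end

section
/- Let q be a prime power coprime to n, γ ∈ ℤ/nℤ, τ = |c_{n/q}(γ)|, n_γ = n/gcd(γ,n), and ω_γ defined as: 2·ord_{rad(n_γ)}(q) if q^{ord_{rad(n_γ)}(q)} ≡ 3 (mod 4) and 8 ∣ n_γ, and ord_{rad(n_γ)}(q) otherwise. Then the leader of c_{n/q}(γ) equals min over j = 0, …, ω_γ − 1 of (γ q^j mod (ω_γ n / τ)). -/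
/-- `ω_γ`: twice the order of `q` modulo `rad(n_γ)` if `q^(ord) ≡ 3 (mod 4)` and
`8 ∣ n_γ`, and the order itself otherwise. -/
noncomputable def omegaGamma (n q : ℕ) (γ : ZMod n) : ℕ :=
  if q ^ orderOf (q : ZMod (rad (n / Nat.gcd γ.val n))) % 4 = 3 ∧ 8 ∣ n / Nat.gcd γ.val n
  then 2 * orderOf (q : ZMod (rad (n / Nat.gcd γ.val n)))
  else orderOf (q : ZMod (rad (n / Nat.gcd γ.val n)))

/-- `E` is an equal-difference subset of `ℤ/nℤ`: an arithmetic progression of some size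
`μ ∣ n` with common difference `n/μ`. -/
def EqDiffSubset (n : ℕ) (E : Set (ZMod n)) : Prop :=
  ∃ δ : ZMod n, ∃ μ : ℕ, 0 < μ ∧ μ ∣ n ∧ E = progression n δ μ

/-- `P` is an equal-difference decomposition of `c_{n/q}(γ)`: a partition of the coset
into nonempty pairwise disjoint equal-difference subsets. -/
def IsEqDiffDecomp (n q : ℕ) (γ : ZMod n) (P : Set (Set (ZMod n))) : Prop :=
  (∀ E ∈ P, EqDiffSubset n E) ∧ (⋃₀ P = coset n q γ) ∧
    P.PairwiseDisjoint id ∧ ∅ ∉ P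

/-- `P₁` is coarser than `P₂`: every part of `P₂` is contained in a part of `P₁`
(so each part of `P₁` is a union of parts of `P₂`). -/
def Coarser (n : ℕ) (P₁ P₂ : Set (Set (ZMod n))) : Prop :=
  ∀ E ∈ P₂, ∃ F ∈ P₁, E ⊆ F

/-!
Write `m = n_γ` for the additive order of `γ`, `ω = ω_γ` and `Q = q^ω`. The coset of `γ` is the
union of the `Q`-orbits of `γ q^j`, `j < ω`. The choice of `ω` makes every prime factor of `m`
divide `Q - 1`, and `4` divide it when `8 ∣ m`; lifting the exponent then gives
`Q^s ≡ 1 (mod m) ↔ m ∣ (Q - 1) s`. So the order `t = τ / ω` of `Q` modulo `m` divides `m` and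
`t γ (Q - 1) = 0`: each orbit lies in a coset `γ q^j + ⟨n / t⟩` of `ℤ/nℤ`, and, having `t`
elements, fills it. The least value on `x + ⟨d⟩` is `x mod d`, and `d = n / t = ω n / τ`.
-/

namespace Int

theorem emultiplicity_pow_sub_one {p : ℕ} (hp : p.Prime) {Q : ℤ} (hpQ : (p : ℤ) ∣ Q - 1)
    (hp4 : Odd p ∨ 4 ∣ Q - 1) (s : ℕ) :
    emultiplicity (p : ℤ) (Q ^ s - 1) = emultiplicity (p : ℤ) ((Q - 1) * s) := by
  have hpQ' : ¬ (p : ℤ) ∣ Q := fun h ↦ by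
    have h1 : (p : ℤ) ∣ 1 := by simpa using dvd_sub h hpQ
    exact hp.ne_one (Nat.dvd_one.mp (by exact_mod_cast h1))
  rw [emultiplicity_mul (Nat.prime_iff_prime_int.mp hp)]
  rcases hp.eq_two_or_odd' with rfl | hodd
  · simpa using Int.two_pow_sub_pow' s (y := 1) (by simpa [Nat.odd_iff] using hp4)
      (by exact_mod_cast hpQ')
  · simpa [Int.natCast_emultiplicity] using
      Int.emultiplicity_pow_sub_pow hp hodd (y := 1) (by simpa using hpQ) hpQ' s

/-- The case `Q ≡ 3 (mod 4)`, where lifting the exponent at `2` fails: both sides hold exactly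
for even `s`. -/
theorem four_dvd_pow_sub_one_iff {Q : ℤ} (hQ : 4 ∣ Q + 1) (s : ℕ) :
    4 ∣ Q ^ s - 1 ↔ 4 ∣ (Q - 1) * s := by
  have hpow : (4 : ℤ) ∣ Q ^ s - (-1) ^ s :=
    dvd_trans (by simpa using hQ) (sub_dvd_pow_sub_pow _ _ s)
  rw [show Q ^ s - 1 = (Q ^ s - (-1) ^ s) + ((-1) ^ s - 1) by ring, dvd_add_right hpow,
    show (Q - 1) * s = (Q + 1) * s - 2 * s by ring, dvd_sub_right (hQ.mul_right _)]
  rcases Nat.even_or_odd' s with ⟨k, rfl | rfl⟩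
  · rw [(even_two_mul k).neg_one_pow]; omega
  · rw [(odd_two_mul_add_one k).neg_one_pow]; omega

theorem prime_pow_dvd_pow_sub_one_iff {p k : ℕ} (hp : p.Prime) {Q : ℤ}
    (hpQ : (p : ℤ) ∣ Q - 1) (h2 : p = 2 → 3 ≤ k → 4 ∣ Q - 1) (s : ℕ) :
    (p : ℤ) ^ k ∣ Q ^ s - 1 ↔ (p : ℤ) ^ k ∣ (Q - 1) * s := by
  by_cases hp4 : Odd p ∨ 4 ∣ Q - 1
  · rw [pow_dvd_iff_le_emultiplicity, pow_dvd_iff_le_emultiplicity,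
      emultiplicity_pow_sub_one hp hpQ hp4]
  obtain ⟨rfl, h4⟩ : p = 2 ∧ ¬ 4 ∣ Q - 1 := by
    push Not at hp4
    exact ⟨hp.eq_two_or_odd'.resolve_right hp4.1, hp4.2⟩
  have hk : k ≤ 2 := by by_contra hk; exact h4 (h2 rfl (by omega))
  push_cast at hpQ ⊢
  interval_cases k
  · simp
  · simpa using ⟨fun _ ↦ hpQ.mul_right _,
      fun _ ↦ dvd_trans hpQ (by simpa using sub_dvd_pow_sub_pow Q 1 s)⟩
  · exact four_dvd_pow_sub_one_iff (by omega) s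

theorem dvd_pow_sub_one_iff {m : ℕ} {Q : ℤ}
    (hrad : ∀ p : ℕ, p.Prime → p ∣ m → (p : ℤ) ∣ Q - 1) (h8 : 8 ∣ m → 4 ∣ Q - 1) (s : ℕ) :
    (m : ℤ) ∣ Q ^ s - 1 ↔ (m : ℤ) ∣ (Q - 1) * s := by
  simp only [Int.natCast_dvd, Nat.dvd_iff_prime_pow_dvd_dvd _ m]
  refine forall₂_congr fun p k ↦ forall₂_congr fun hp hpk ↦ ?_
  rcases k.eq_zero_or_pos with rfl | hk
  · simp
  simp only [← Int.natCast_dvd, Nat.cast_pow]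
  refine prime_pow_dvd_pow_sub_one_iff hp (hrad p hp (dvd_trans (dvd_pow_self p hk.ne') hpk))
    (fun hp2 hk3 ↦ h8 (dvd_trans ?_ hpk)) s
  subst hp2
  exact Nat.pow_dvd_pow 2 hk3

end Int

theorem ZMod.natCast_pow_eq_one_iff {k q s : ℕ} :
    (q : ZMod k) ^ s = 1 ↔ (k : ℤ) ∣ (q : ℤ) ^ s - 1 := by
  rw [← ZMod.intCast_zmod_eq_zero_iff_dvd]
  push_cast
  exact sub_eq_zero.symm

theorem ZMod.orderOf_natCast_pos {k q : ℕ} [NeZero k] (h : q.Coprime k) :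
    0 < orderOf (q : ZMod k) := by
  rw [← ZMod.coe_unitOfCoprime q h, orderOf_units]
  exact orderOf_pos _

theorem rad_pos (m : ℕ) : 0 < rad m :=
  Finset.prod_pos fun _ hp ↦ (Nat.prime_of_mem_primeFactors hp).pos

theorem prime_dvd_rad {p m : ℕ} (hp : p.Prime) (hpm : p ∣ m) (hm : m ≠ 0) : p ∣ rad m :=
  Finset.dvd_prod_of_mem _ (Nat.mem_primeFactors.mpr ⟨hp, hpm, hm⟩)

noncomputable def omegaOf (q m : ℕ) : ℕ :=
  if q ^ orderOf (q : ZMod (rad m)) % 4 = 3 ∧ 8 ∣ m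
  then 2 * orderOf (q : ZMod (rad m))
  else orderOf (q : ZMod (rad m))

theorem omegaGamma_eq_omegaOf {n : ℕ} [NeZero n] (q : ℕ) (γ : ZMod n) :
    omegaGamma n q γ = omegaOf q (addOrderOf γ) := by
  have h : n / Nat.gcd γ.val n = addOrderOf γ := by
    conv_rhs => rw [← ZMod.natCast_zmod_val γ]
    rw [ZMod.addOrderOf_coe _ (NeZero.ne n), Nat.gcd_comm]
  rw [← h]
  rfl

section omegaOf

variable {q m : ℕ}

theorem orderOf_rad_dvd_omegaOf : orderOf (q : ZMod (rad m)) ∣ omegaOf q m := by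
  unfold omegaOf
  split_ifs
  exacts [dvd_mul_left _ _, dvd_rfl]

theorem omegaOf_pos (hqm : q.Coprime m) : 0 < omegaOf q m := by
  have : NeZero (rad m) := ⟨(rad_pos m).ne'⟩
  have := ZMod.orderOf_natCast_pos (k := rad m)
    (hqm.coprime_dvd_right (Nat.prod_primeFactors_dvd m))
  unfold omegaOf
  split_ifs <;> omega

theorem prime_dvd_pow_sub_one_of_orderOf_rad_dvd {p s : ℕ} (hp : p.Prime) (hpm : p ∣ m)
    (hm : m ≠ 0) (hs : orderOf (q : ZMod (rad m)) ∣ s) : (p : ℤ) ∣ (q : ℤ) ^ s - 1 :=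
  dvd_trans (Int.natCast_dvd_natCast.mpr (prime_dvd_rad hp hpm hm))
    (ZMod.natCast_pow_eq_one_iff.mp (orderOf_dvd_iff_pow_eq_one.mp hs))

theorem four_dvd_pow_omegaOf_sub_one (hm : m ≠ 0) (h8 : 8 ∣ m) :
    (4 : ℤ) ∣ (q : ℤ) ^ omegaOf q m - 1 := by
  set ω₀ := orderOf (q : ZMod (rad m))
  have h2 : (2 : ℤ) ∣ ((q ^ ω₀ : ℕ) : ℤ) - 1 := by
    exact_mod_cast prime_dvd_pow_sub_one_of_orderOf_rad_dvd Nat.prime_two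
      (dvd_trans (by norm_num) h8) hm dvd_rfl
  by_cases h3 : q ^ ω₀ % 4 = 3
  · rw [show omegaOf q m = 2 * ω₀ from if_pos ⟨h3, h8⟩, mul_comm, pow_mul]
    have hodd : Odd ((q : ℤ) ^ ω₀) := by
      rw [Int.odd_iff]; push_cast at h2; omega
    exact dvd_trans (by norm_num) (Int.eight_dvd_sq_sub_one_of_odd hodd)
  · rw [show omegaOf q m = ω₀ from if_neg fun h ↦ h3 h.1, ← Nat.cast_pow]
    omega

theorem omegaOf_dvd_of_pow_eq_one {s : ℕ} (h : (q : ZMod m) ^ s = 1) : omegaOf q m ∣ s := by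
  set ω₀ := orderOf (q : ZMod (rad m))
  obtain ⟨k, rfl⟩ : ω₀ ∣ s := orderOf_dvd_of_pow_eq_one (by
    rw [ZMod.natCast_pow_eq_one_iff] at h ⊢
    exact dvd_trans (Int.natCast_dvd_natCast.mpr (Nat.prod_primeFactors_dvd m)) h)
  unfold omegaOf
  split_ifs with hc
  · refine mul_comm 2 ω₀ ▸ mul_dvd_mul_left ω₀ (even_iff_two_dvd.mp ?_)
    have h4 : (q : ZMod 4) ^ (ω₀ * k) = 1 := by
      rw [ZMod.natCast_pow_eq_one_iff] at h ⊢
      exact dvd_trans (Int.natCast_dvd_natCast.mpr (dvd_trans (by norm_num) hc.2)) h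
    have hq3 : (q : ZMod 4) ^ ω₀ = -1 := by
      rw [← Nat.cast_pow, ← ZMod.natCast_mod, hc.1]; decide
    rwa [pow_mul, hq3, neg_one_pow_eq_one_iff_even (by decide)] at h4
  · exact dvd_mul_right _ _

theorem exists_orderOf_eq_omegaOf_mul (hm : m ≠ 0) (hqm : q.Coprime m) :
    ∃ t, orderOf (q : ZMod m) = omegaOf q m * t ∧ t ∣ m ∧
      (m : ℤ) ∣ ((q : ℤ) ^ omegaOf q m - 1) * t := by
  obtain ⟨t, ht⟩ := omegaOf_dvd_of_pow_eq_one (pow_orderOf_eq_one (q : ZMod m))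
  have hlte := Int.dvd_pow_sub_one_iff (m := m) (Q := (q : ℤ) ^ omegaOf q m)
    (fun p hp hpm ↦ prime_dvd_pow_sub_one_of_orderOf_rad_dvd hp hpm hm orderOf_rad_dvd_omegaOf)
    (four_dvd_pow_omegaOf_sub_one hm)
  refine ⟨t, ht, ?_, ?_⟩
  · have h : orderOf (q : ZMod m) ∣ omegaOf q m * m := by
      refine orderOf_dvd_of_pow_eq_one ?_
      rw [ZMod.natCast_pow_eq_one_iff, pow_mul, hlte]
      exact dvd_mul_left _ _
    exact Nat.dvd_of_mul_dvd_mul_left (omegaOf_pos hqm) (ht ▸ h)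
  · rw [← hlte, ← pow_mul, ← ht, ← ZMod.natCast_pow_eq_one_iff]
    exact pow_orderOf_eq_one _

end omegaOf

theorem mul_natCast_pow_sub_self {R : Type*} [CommRing R] (x : R) (q s : ℕ) :
    x * q ^ s - x = ((q : ℤ) ^ s - 1) • x := by
  rw [zsmul_eq_mul]; push_cast; ring

theorem ZMod.mul_pow_eq_self_iff {n : ℕ} (γ : ZMod n) (q s : ℕ) :
    γ * q ^ s = γ ↔ (q : ZMod (addOrderOf γ)) ^ s = 1 := by
  rw [← sub_eq_zero, mul_natCast_pow_sub_self, ← addOrderOf_dvd_iff_zsmul_eq_zero,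
    ZMod.natCast_pow_eq_one_iff]

theorem cosetSize.eq_orderOf {n q τ : ℕ} {γ : ZMod n} (hτ : cosetSize n q γ τ) :
    τ = orderOf (q : ZMod (addOrderOf γ)) := by
  obtain ⟨⟨hτ0, hτγ⟩, hmin⟩ := hτ
  rw [ZMod.mul_pow_eq_self_iff] at hτγ
  have hpos : 0 < orderOf (q : ZMod (addOrderOf γ)) :=
    orderOf_pos_iff.mpr (isOfFinOrder_iff_pow_eq_one.mpr ⟨τ, hτ0, hτγ⟩)
  exact le_antisymm (hmin ⟨hpos, (ZMod.mul_pow_eq_self_iff γ q _).mpr (pow_orderOf_eq_one _)⟩)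
    (Nat.le_of_dvd hτ0 (orderOf_dvd_of_pow_eq_one hτγ))

open AddSubgroup

section Orbit

variable {R : Type*} [CommRing R] {H : AddSubgroup R} {x : R} {Q : ℕ}

theorem mul_pow_sub_self_mem (hx : x * Q - x ∈ H) (s : ℕ) : x * Q ^ s - x ∈ H := by
  induction s with
  | zero => simp
  | succ s ih =>
    have h : x * Q ^ (s + 1) - x = Q • (x * Q ^ s - x) + (x * Q - x) := by
      rw [nsmul_eq_mul]; ring
    exact h ▸ add_mem (nsmul_mem ih Q) hx

/-- Pigeonhole: the points `x Q^s`, `s < |H|`, are distinct and lie in `x + H`. -/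
theorem exists_mul_pow_eq_add [Finite R] (hQ : IsUnit (Q : R)) (hx : x * Q - x ∈ H)
    (hper : ∀ s, x * Q ^ s = x ↔ Nat.card H ∣ s) {y : R} (hy : y ∈ H) :
    ∃ s, x * Q ^ s = x + y := by
  set f : Fin (Nat.card H) → H := fun s ↦ ⟨x * Q ^ (s : ℕ) - x, mul_pow_sub_self_mem hx s⟩
  have hf : Function.Injective f := by
    have key : ∀ a b : Fin (Nat.card H), a ≤ b → f a = f b → a = b := by
      intro a b hab hfab
      have hxab : x * Q ^ (b - a : ℕ) * Q ^ (a : ℕ) = x * Q ^ (a : ℕ) := by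
        rw [mul_assoc, ← pow_add, Nat.sub_add_cancel hab]
        simpa [f] using hfab.symm
      have hdvd := (hper _).mp ((hQ.pow _).mul_left_injective hxab)
      exact Fin.ext (by have := Nat.eq_zero_of_dvd_of_lt hdvd (by omega); omega)
    intro a b hab
    rcases le_total a b with h | h
    exacts [key a b h hab, (key b a h hab.symm).symm]
  obtain ⟨s, hs⟩ := (hf.bijective_of_nat_card_le (by simp)).surjective ⟨y, hy⟩
  exact ⟨s, by simpa [f, sub_eq_iff_eq_add'] using congrArg Subtype.val hs⟩

end Orbit

namespace ZMod

variable {n d : ℕ} [NeZero n]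

theorem val_add_mod_of_mem_zmultiples (hd : d ∣ n) (x : ZMod n) {z : ZMod n}
    (hz : z ∈ zmultiples (d : ZMod n)) : (x + z).val % d = x.val % d := by
  have hval : ∀ w : ZMod n, (castHom hd (ZMod d) w).val = w.val % d := fun w ↦ by
    rw [castHom_apply, cast_eq_val, val_natCast]
  obtain ⟨k, rfl⟩ := mem_zmultiples_iff.mp hz
  rw [← hval, ← hval, map_add, map_zsmul, map_natCast, natCast_self, smul_zero, add_zero]

theorem exists_mem_zmultiples_val_add_eq (hd : d ∣ n) (x : ZMod n) :
    ∃ z ∈ zmultiples (d : ZMod n), (x + z).val = x.val % d := by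
  refine ⟨(-(x.val / d : ℕ) : ℤ) • (d : ZMod n), zsmul_mem (mem_zmultiples _) _, ?_⟩
  have hdn : x.val % d < n :=
    lt_of_lt_of_le (Nat.mod_lt _ (Nat.pos_of_dvd_of_pos hd (NeZero.pos n)))
      (Nat.le_of_dvd (NeZero.pos n) hd)
  have hx : x = ((x.val % d + d * (x.val / d) : ℕ) : ZMod n) := by
    rw [Nat.mod_add_div, natCast_zmod_val]
  have hsum : x + (-(x.val / d : ℕ) : ℤ) • (d : ZMod n) = ((x.val % d : ℕ) : ZMod n) := by
    nth_rw 1 [hx]; rw [neg_smul, natCast_zsmul, nsmul_eq_mul]; push_cast; ring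
  rw [hsum, val_cast_of_lt hdn]

theorem mem_zmultiples_of_nsmul_eq_zero {t : ℕ} (ht : t ∣ n) {y : ZMod n} (hy : t • y = 0) :
    y ∈ zmultiples ((n / t : ℕ) : ZMod n) := by
  obtain ⟨e, he⟩ := ht
  have ht0 : 0 < t := Nat.pos_of_ne_zero fun h ↦ NeZero.ne n (by simp [he, h])
  have hdvd : t * e ∣ t * y.val := by
    rw [← he, ← natCast_eq_zero_iff, Nat.cast_mul, natCast_zmod_val, ← nsmul_eq_mul, hy]
  obtain ⟨c, hc⟩ := Nat.dvd_of_mul_dvd_mul_left ht0 hdvd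
  have hne : n / t = e := by rw [he, Nat.mul_div_cancel_left e ht0]
  refine mem_zmultiples_iff.mpr ⟨c, ?_⟩
  rw [hne, natCast_zsmul, nsmul_eq_mul, ← natCast_zmod_val y, hc]
  push_cast
  ring

theorem exists_mul_pow_val_eq_val_mod {t Q : ℕ} (hQ : IsUnit (Q : ZMod n)) (ht : t ∣ n)
    {x : ZMod n} (hx : x * Q - x ∈ zmultiples ((n / t : ℕ) : ZMod n))
    (hper : ∀ s, x * Q ^ s = x ↔ t ∣ s) : ∃ s, (x * Q ^ s).val = x.val % (n / t) := by
  have hcard : Nat.card (zmultiples ((n / t : ℕ) : ZMod n)) = t := by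
    rw [Nat.card_zmultiples, addOrderOf_coe _ (NeZero.ne n),
      Nat.gcd_eq_right (Nat.div_dvd_of_dvd ht), Nat.div_div_self ht (NeZero.ne n)]
  obtain ⟨z, hz, hzval⟩ := exists_mem_zmultiples_val_add_eq (Nat.div_dvd_of_dvd ht) x
  obtain ⟨s, hs⟩ := exists_mul_pow_eq_add hQ hx (by rwa [hcard]) hz
  exact ⟨s, hs ▸ hzval⟩

end ZMod

theorem Nat.sInf_eq_of_subset_of_forall_exists_le {A B : Set ℕ} (hB : B.Nonempty) (hBA : B ⊆ A)
    (hAB : ∀ a ∈ A, ∃ b ∈ B, b ≤ a) : sInf A = sInf B := by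
  obtain ⟨b, hb, hle⟩ := hAB _ (Nat.sInf_mem (hB.mono hBA))
  exact le_antisymm (Nat.sInf_le (hBA (Nat.sInf_mem hB))) ((Nat.sInf_le hb).trans hle)

open ZMod in
/-- The `q`-orbit of `γ` is the union of the cosets `γ q^j + ⟨n / t⟩`, `j < ω`. -/
theorem sInf_val_coset_eq {n q ω t : ℕ} [NeZero n] {γ : ZMod n} (hq : IsUnit (q : ZMod n))
    (hω : 0 < ω) (ht : t ∣ n) (hstep : t • (γ * q ^ ω - γ) = 0)
    (hper : ∀ s, γ * q ^ (ω * s) = γ ↔ t ∣ s) :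
    sInf (ZMod.val '' coset n q γ) = sInf {m | ∃ j < ω, m = (γ.val * q ^ j) % (n / t)} := by
  set d := n / t
  have hstep' (j : ℕ) : γ * q ^ j * (q ^ ω : ℕ) - γ * q ^ j ∈ zmultiples (d : ZMod n) := by
    convert nsmul_mem (mem_zmultiples_of_nsmul_eq_zero ht hstep) (q ^ j) using 1
    rw [nsmul_eq_mul]; push_cast; ring
  have hper' (j s : ℕ) : γ * q ^ j * (q ^ ω : ℕ) ^ s = γ * q ^ j ↔ t ∣ s := by
    rw [← hper, mul_right_comm, (hq.pow j).mul_left_inj]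
    push_cast; rw [pow_mul]
  have hval (j : ℕ) : (γ * q ^ j).val % d = γ.val * q ^ j % d := by
    have hcast : γ * q ^ j = ((γ.val * q ^ j : ℕ) : ZMod n) := by
      push_cast; rw [natCast_zmod_val]
    rw [hcast, val_natCast, Nat.mod_mod_of_dvd _ (Nat.div_dvd_of_dvd ht)]
  refine Nat.sInf_eq_of_subset_of_forall_exists_le ⟨_, 0, hω, rfl⟩ ?_ ?_
  · rintro _ ⟨j, -, rfl⟩
    obtain ⟨s, hs⟩ := exists_mul_pow_val_eq_val_mod (by push_cast; exact hq.pow ω) ht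
      (hstep' j) (hper' j)
    exact ⟨_, ⟨j + ω * s, by push_cast; ring⟩, hs.trans (hval j)⟩
  · rintro _ ⟨_, ⟨i, rfl⟩, rfl⟩
    have hi : γ * q ^ i = γ * q ^ (i % ω) +
        (γ * q ^ (i % ω) * (q ^ ω : ℕ) ^ (i / ω) - γ * q ^ (i % ω)) := by
      rw [add_sub_cancel]; push_cast; rw [mul_assoc, ← pow_mul, ← pow_add, Nat.mod_add_div]
    refine ⟨_, ⟨i % ω, Nat.mod_lt _ hω, rfl⟩, ?_⟩
    calc γ.val * q ^ (i % ω) % d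
        = (γ * q ^ i).val % d := by
          rw [hi, val_add_mod_of_mem_zmultiples (Nat.div_dvd_of_dvd ht) _
            (mul_pow_sub_self_mem (hstep' _) _), hval]
      _ ≤ (γ * q ^ i).val := Nat.mod_le _ _

theorem leader_of_coset_general (n q τ : ℕ) (hn : 0 < n)
    (hco : Nat.Coprime q n) (γ : ZMod n)
    (hτ : cosetSize n q γ τ) :
    sInf (ZMod.val '' coset n q γ) =
      sInf {m : ℕ | ∃ j < omegaGamma n q γ,
        m = (γ.val * q ^ j) % (omegaGamma n q γ * n / τ)} := by
  have : NeZero n := ⟨hn.ne'⟩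
  have hmn : addOrderOf γ ∣ n := by simpa using addOrderOf_dvd_natCard γ
  have hqm : q.Coprime (addOrderOf γ) := hco.coprime_dvd_right hmn
  have hω := omegaOf_pos hqm
  obtain ⟨t, hτt, htm, hmt⟩ := exists_orderOf_eq_omegaOf_mul (addOrderOf_pos γ).ne' hqm
  rw [← hτ.eq_orderOf] at hτt
  rw [omegaGamma_eq_omegaOf, hτt, Nat.mul_div_mul_left _ _ hω]
  refine sInf_val_coset_eq ((ZMod.isUnit_iff_coprime q n).mpr hco) hω (htm.trans hmn) ?_ ?_
  · rw [mul_natCast_pow_sub_self, ← natCast_zsmul, smul_smul,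
      ← addOrderOf_dvd_iff_zsmul_eq_zero, mul_comm]
    exact hmt
  · intro s
    rw [ZMod.mul_pow_eq_self_iff, ← orderOf_dvd_iff_pow_eq_one, ← hτ.eq_orderOf, hτt,
      Nat.mul_dvd_mul_iff_left hω]

/-- The leader of `c_{n/q}(γ)` is the minimum of `γ q^j mod (ω_γ n / τ)` over
`j = 0, …, ω_γ - 1`. -/
theorem leader_of_coset (n q τ : ℕ) (hn : 0 < n)
    (hq : ∃ p k : ℕ, p.Prime ∧ 0 < k ∧ q = p ^ k) (hco : Nat.Coprime q n) (γ : ZMod n)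
    (hτ : cosetSize n q γ τ) :
    sInf (ZMod.val '' coset n q γ) =
      sInf {m : ℕ | ∃ j < omegaGamma n q γ,
        m = (γ.val * q ^ j) % (omegaGamma n q γ * n / τ)} :=
  leader_of_coset_general n q τ hn hco γ hτ
end
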